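/- Growing against unique maximal contraction gives a bijection: let b be a planar binary tree with β ≥ 2 leaves, let A (with K leaves) and the index set I ⊆ {1,…,K} of Y-positions (|I| = L, K + L = β) be the maximal contraction data of b. Then the map J ↦ E^J∝A, sending subsets J ⊆ I to trees obtained by growing Y at the positions in J and ε elsewhere, is a bijection from the subsets of I onto the set of pairs (a,E) with E∝a = b (i.e., onto the trees a that occur in some growing representation of b), and |E^J∝A| = K + |J| − 1. -/

import Mathlib

/-- Planar binary trees: a leaf `ε`, or a grafting `B₊(b₁,b₂)` of two trees under a new root. -/
inductive PBT : Type
  | leaf : PBT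
  | node : PBT → PBT → PBT
  deriving DecidableEq

namespace PBT

/-- The number of internal vertices `|b|`. -/
def internal : PBT → ℕ
  | leaf => 0
  | node b₁ b₂ => internal b₁ + internal b₂ + 1

/-- The number of leaves `‖b‖`. -/
def leaves : PBT → ℕ
  | leaf => 1
  | node b₁ b₂ => leaves b₁ + leaves b₂

/-- The tree `Y` with one internal vertex and two leaves. -/
def Y : PBT := node leaf leaf

/-- Helper for grafting: replaces the leaves of the first argument, in left-to-right
order, by the entries of the list, returning the grown tree and the unused entries. -/
def graftAux : PBT → List PBT → PBT × List PBT
  | leaf, [] => (leaf, [])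
  | leaf, e :: rest => (e, rest)
  | node a b, l =>
      let p := graftAux a l
      let q := graftAux b p.2
      (node p.1 q.1, q.2)

/-- The growing `E ∝ a`: replace the i-th leaf of `a` by the i-th entry of `E`. -/
def graft (a : PBT) (E : List PBT) : PBT := (graftAux a E).1

/-- `Rep b a E` : the pair `(a, E)` is a growing representation of `b`,
i.e. `E ∈ {ε,Y}^‖a‖` and `E ∝ a = b`. -/
def Rep (b a : PBT) (E : List PBT) : Prop :=
  (∀ e ∈ E, e = leaf ∨ e = Y) ∧ E.length = a.leaves ∧ graft a E = b

lemma leaves_pos : ∀ a : PBT, 1 ≤ a.leaves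
  | leaf => le_refl _
  | node a b => by have := leaves_pos a; simp only [leaves]; omega

lemma graftAux_append : ∀ (a : PBT) (E rest : List PBT), E.length = a.leaves →
    graftAux a (E ++ rest) = ((graftAux a E).1, rest)
  | leaf, E, rest, h => by
    match E, h with
    | [e], _ => rfl
  | node a₁ a₂, E, rest, h => by
    simp only [leaves] at h
    have h1 : a₁.leaves ≤ E.length := by omega
    have hE : E.take a₁.leaves ++ E.drop a₁.leaves = E := E.take_append_drop _
    have l1 : (E.take a₁.leaves).length = a₁.leaves := by simp; omega
    have l2 : (E.drop a₁.leaves).length = a₂.leaves := by simp; omega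
    conv_lhs => rw [← hE, List.append_assoc]
    conv_rhs => rw [← hE]
    simp only [graftAux]
    rw [graftAux_append a₁ _ _ l1, graftAux_append a₁ _ _ l1]
    simp only
    rw [graftAux_append a₂ _ _ l2]

lemma graft_node (a₁ a₂ : PBT) (E₁ E₂ : List PBT) (h₁ : E₁.length = a₁.leaves)
    (h₂ : E₂.length = a₂.leaves) :
    graft (node a₁ a₂) (E₁ ++ E₂) = node (graft a₁ E₁) (graft a₂ E₂) := by
  unfold graft
  simp only [graftAux]
  rw [graftAux_append a₁ _ _ h₁]

lemma graft_leaf (e : PBT) : graft leaf [e] = e := rfl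


lemma rep_leaf_iff {b : PBT} {E : List PBT} :
    Rep b leaf E ↔ E = [b] ∧ (b = leaf ∨ b = Y) := by
  constructor
  · rintro ⟨hent, hlen, hg⟩
    simp only [leaves] at hlen
    match E, hlen with
    | [e], _ =>
      have : e = b := hg
      subst this
      exact ⟨rfl, hent _ (by simp)⟩
  · rintro ⟨rfl, hb⟩
    exact ⟨by simpa using hb, rfl, rfl⟩

lemma rep_node_iff {b a₁ a₂ : PBT} {E : List PBT} :
    Rep b (node a₁ a₂) E ↔ ∃ b₁ b₂ E₁ E₂, b = node b₁ b₂ ∧ E = E₁ ++ E₂ ∧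
      Rep b₁ a₁ E₁ ∧ Rep b₂ a₂ E₂ := by
  constructor
  · rintro ⟨hent, hlen, hg⟩
    simp only [leaves] at hlen
    have l1 : (E.take a₁.leaves).length = a₁.leaves := by simp; omega
    have l2 : (E.drop a₁.leaves).length = a₂.leaves := by simp; omega
    have hE : E.take a₁.leaves ++ E.drop a₁.leaves = E := E.take_append_drop _
    rw [← hE, graft_node _ _ _ _ l1 l2] at hg
    refine ⟨_, _, _, _, hg.symm, hE.symm, ⟨?_, l1, rfl⟩, ⟨?_, l2, rfl⟩⟩
    · exact fun e he => hent e (by rw [← hE]; exact List.mem_append_left _ he)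
    · exact fun e he => hent e (by rw [← hE]; exact List.mem_append_right _ he)
  · rintro ⟨b₁, b₂, E₁, E₂, rfl, rfl, ⟨h1, l1, g1⟩, ⟨h2, l2, g2⟩⟩
    refine ⟨?_, ?_, ?_⟩
    · intro e he; rcases List.mem_append.1 he with h | h
      exacts [h1 e h, h2 e h]
    · simp [leaves, l1, l2]
    · rw [graft_node _ _ _ _ l1 l2, g1, g2]

lemma internal_graft : ∀ (a : PBT) (E : List PBT), (∀ e ∈ E, e = leaf ∨ e = Y) →
    E.length = a.leaves → (graft a E).internal = a.internal + E.count Y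
  | leaf, E, hent, hlen => by
    simp only [leaves] at hlen
    match E, hlen with
    | [e], _ =>
      rcases hent e (by simp) with rfl | rfl <;> simp [graft_leaf, internal, Y]
  | node a₁ a₂, E, hent, hlen => by
    simp only [leaves] at hlen
    have l1 : (E.take a₁.leaves).length = a₁.leaves := by simp; omega
    have l2 : (E.drop a₁.leaves).length = a₂.leaves := by simp; omega
    have hE : E.take a₁.leaves ++ E.drop a₁.leaves = E := E.take_append_drop _
    rw [← hE, graft_node _ _ _ _ l1 l2]
    simp only [internal]
    rw [internal_graft a₁ _ (fun e he => hent e (by rw [← hE]; exact List.mem_append_left _ he)) l1,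
        internal_graft a₂ _ (fun e he => hent e (by rw [← hE]; exact List.mem_append_right _ he)) l2]
    simp only [internal, List.count_append]
    omega

lemma leaves_graft : ∀ (a : PBT) (E : List PBT), (∀ e ∈ E, e = leaf ∨ e = Y) →
    E.length = a.leaves → (graft a E).leaves = E.length + E.count Y
  | leaf, E, hent, hlen => by
    simp only [leaves] at hlen
    match E, hlen with
    | [e], _ =>
      rcases hent e (by simp) with rfl | rfl <;> simp [graft_leaf, leaves, Y]
  | node a₁ a₂, E, hent, hlen => by
    simp only [leaves] at hlen
    have l1 : (E.take a₁.leaves).length = a₁.leaves := by simp; omega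
    have l2 : (E.drop a₁.leaves).length = a₂.leaves := by simp; omega
    have hE : E.take a₁.leaves ++ E.drop a₁.leaves = E := E.take_append_drop _
    rw [← hE, graft_node _ _ _ _ l1 l2]
    rw [show (node (graft a₁ (E.take a₁.leaves)) (graft a₂ (E.drop a₁.leaves))).leaves
        = _ + _ from rfl]
    rw [leaves_graft a₁ _ (fun e he => hent e (by rw [← hE]; exact List.mem_append_left _ he)) l1,
        leaves_graft a₂ _ (fun e he => hent e (by rw [← hE]; exact List.mem_append_right _ he)) l2]
    simp only [List.count_append, List.length_append]
    omega

lemma graft_inj : ∀ (a : PBT) (E E' : List PBT), E.length = a.leaves →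
    E'.length = a.leaves → graft a E = graft a E' → E = E'
  | leaf, E, E', h, h', hg => by
    simp only [leaves] at h h'
    match E, E', h, h' with
    | [e], [e'], _, _ => rw [show e = e' from hg]
  | node a₁ a₂, E, E', h, h', hg => by
    simp only [leaves] at h h'
    have l1 : (E.take a₁.leaves).length = a₁.leaves := by simp; omega
    have l2 : (E.drop a₁.leaves).length = a₂.leaves := by simp; omega
    have l1' : (E'.take a₁.leaves).length = a₁.leaves := by simp; omega
    have l2' : (E'.drop a₁.leaves).length = a₂.leaves := by simp; omega
    have hE : E.take a₁.leaves ++ E.drop a₁.leaves = E := E.take_append_drop _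
    have hE' : E'.take a₁.leaves ++ E'.drop a₁.leaves = E' := E'.take_append_drop _
    rw [← hE, ← hE', graft_node _ _ _ _ l1 l2, graft_node _ _ _ _ l1' l2'] at hg
    injection hg with hg1 hg2
    rw [← hE, ← hE', graft_inj a₁ _ _ l1 l1' hg1, graft_inj a₂ _ _ l2 l2' hg2]

lemma graft_replicate : ∀ a : PBT, graft a (List.replicate a.leaves leaf) = a
  | leaf => rfl
  | node a₁ a₂ => by
    have : List.replicate (node a₁ a₂).leaves leaf
        = List.replicate a₁.leaves leaf ++ List.replicate a₂.leaves leaf := by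
      rw [show (node a₁ a₂).leaves = a₁.leaves + a₂.leaves from rfl, List.replicate_add]
    rw [this, graft_node _ _ _ _ (by simp) (by simp), graft_replicate a₁, graft_replicate a₂]

lemma internal_eq_leaves_sub_one : ∀ a : PBT, a.internal = a.leaves - 1
  | leaf => rfl
  | node a₁ a₂ => by
    have h1 := internal_eq_leaves_sub_one a₁
    have h2 := internal_eq_leaves_sub_one a₂
    have := leaves_pos a₁; have := leaves_pos a₂
    simp only [internal, leaves]; omega


/-- Selection relation: `Sel x y` means `y ∈ {ε,Y}` and `y = Y` only where `x = Y`. -/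
def Sel (x y : PBT) : Prop := (y = leaf ∨ y = Y) ∧ (y = Y → x = Y)

/-- Maximal contraction of a tree: contract every terminal `Y` to a leaf. -/
def contract : PBT → PBT
  | leaf => leaf
  | node b₁ b₂ => if b₁ = leaf ∧ b₂ = leaf then leaf else node (contract b₁) (contract b₂)

/-- The list `Ê` with `Ê ∝ contract b = b`. -/
def hatE : PBT → List PBT
  | leaf => [leaf]
  | node b₁ b₂ => if b₁ = leaf ∧ b₂ = leaf then [Y] else hatE b₁ ++ hatE b₂

lemma rep_hatE : ∀ b : PBT, Rep b (contract b) (hatE b)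
  | leaf => ⟨by simp [hatE], rfl, rfl⟩
  | node b₁ b₂ => by
    by_cases h : b₁ = leaf ∧ b₂ = leaf
    · obtain ⟨rfl, rfl⟩ := h
      refine ⟨by simp [hatE], by simp [hatE, contract, leaves], ?_⟩
      simp only [hatE, contract, if_pos (⟨rfl, rfl⟩ : leaf = leaf ∧ leaf = leaf)]
      rfl
    · have h₁ := rep_hatE b₁
      have h₂ := rep_hatE b₂
      simp only [contract, hatE, if_neg h]
      exact rep_node_iff.mpr ⟨b₁, b₂, hatE b₁, hatE b₂, rfl, rfl, h₁, h₂⟩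

lemma rep_of_leaf {a : PBT} {E : List PBT} (h : Rep leaf a E) : a = leaf ∧ E = [leaf] := by
  obtain ⟨hent, hlen, hg⟩ := h
  have hi := internal_graft a E hent hlen
  rw [hg] at hi
  have ha : a = leaf := by
    cases a with
    | leaf => rfl
    | node a₁ a₂ => exact absurd hi (by simp only [internal]; omega)
  subst ha
  rcases rep_leaf_iff.mp ⟨hent, hlen, hg⟩ with ⟨rfl, _⟩
  exact ⟨rfl, rfl⟩

/-- The main structure lemma: trees occurring in a growing representation of `b` are
exactly those obtained by growing a selection `E'` against the maximal contraction. -/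
lemma main_iff : ∀ (b a : PBT), (∃ E, Rep b a E) ↔
    ∃ E', List.Forall₂ Sel (hatE b) E' ∧ a = graft (contract b) E'
  | leaf, a => by
    constructor
    · rintro ⟨E, hE⟩
      obtain ⟨rfl, -⟩ := rep_of_leaf hE
      exact ⟨[leaf], by simp [hatE, Sel], rfl⟩
    · rintro ⟨E', hsel, rfl⟩
      simp only [hatE] at hsel
      rcases List.forall₂_cons_left_iff.mp hsel with ⟨y, E'', ⟨hy, hYy⟩, hnil, rfl⟩
      rcases List.forall₂_nil_left_iff.mp hnil with rfl
      have hy' : y = leaf := by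
        rcases hy with rfl | rfl
        · rfl
        · exact absurd (hYy rfl) (by simp [Y])
      subst hy'
      exact ⟨[leaf], ⟨by simp, rfl, rfl⟩⟩
  | node b₁ b₂, a => by
    by_cases h : b₁ = leaf ∧ b₂ = leaf
    · obtain ⟨rfl, rfl⟩ := h
      simp only [hatE, contract, if_pos (⟨rfl, rfl⟩ : leaf = leaf ∧ leaf = leaf)]
      constructor
      · rintro ⟨E, hE⟩
        cases a with
        | leaf =>
          exact ⟨[leaf], List.Forall₂.cons ⟨Or.inl rfl, fun _ => rfl⟩ List.Forall₂.nil, rfl⟩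
        | node a₁ a₂ =>
          rcases rep_node_iff.mp hE with ⟨c₁, c₂, E₁, E₂, hc, rfl, h1, h2⟩
          have : c₁ = leaf ∧ c₂ = leaf := by
            injection hc with u v; exact ⟨u.symm, v.symm⟩
          obtain ⟨rfl, rfl⟩ := this
          obtain ⟨rfl, -⟩ := rep_of_leaf h1
          obtain ⟨rfl, -⟩ := rep_of_leaf h2
          exact ⟨[Y], List.Forall₂.cons ⟨Or.inr rfl, fun _ => rfl⟩ List.Forall₂.nil, rfl⟩
      · rintro ⟨E', hsel, rfl⟩
        rcases List.forall₂_cons_left_iff.mp hsel with ⟨y, E'', ⟨hy, -⟩, hnil, rfl⟩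
        rcases List.forall₂_nil_left_iff.mp hnil with rfl
        rcases hy with rfl | rfl
        · exact ⟨[Y], rep_leaf_iff.mpr ⟨rfl, Or.inr rfl⟩⟩
        · refine ⟨[leaf, leaf], ?_⟩
          show Rep (node leaf leaf) (graft leaf [Y]) [leaf, leaf]
          have : graft leaf [Y] = Y := rfl
          rw [this]
          exact rep_node_iff.mpr ⟨leaf, leaf, [leaf], [leaf], rfl, rfl,
            ⟨by simp, rfl, rfl⟩, ⟨by simp, rfl, rfl⟩⟩
    · simp only [hatE, contract, if_neg h]
      constructor
      · rintro ⟨E, hE⟩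
        cases a with
        | leaf =>
          rcases rep_leaf_iff.mp hE with ⟨-, hb | hb⟩
          · exact absurd hb (by simp)
          · exfalso
            apply h
            have : node b₁ b₂ = node leaf leaf := hb
            injection this with u v
            exact ⟨u, v⟩
        | node a₁ a₂ =>
          rcases rep_node_iff.mp hE with ⟨c₁, c₂, E₁, E₂, hc, rfl, h1, h2⟩
          injection hc with u v
          subst u; subst v
          rcases (main_iff b₁ a₁).mp ⟨E₁, h1⟩ with ⟨F₁, hs₁, rfl⟩
          rcases (main_iff b₂ a₂).mp ⟨E₂, h2⟩ with ⟨F₂, hs₂, rfl⟩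
          refine ⟨F₁ ++ F₂, List.rel_append hs₁ hs₂, ?_⟩
          rw [graft_node _ _ _ _ ?_ ?_]
          · rw [← hs₁.length_eq, (rep_hatE b₁).2.1]
          · rw [← hs₂.length_eq, (rep_hatE b₂).2.1]
      · rintro ⟨E', hsel, rfl⟩
        set n := (hatE b₁).length with hn
        have hsplit : E'.take n ++ E'.drop n = E' := E'.take_append_drop n
        have hs₁ : List.Forall₂ Sel (hatE b₁) (E'.take n) := by
          have := List.forall₂_take n hsel
          rwa [hn, List.take_left] at this
        have hs₂ : List.Forall₂ Sel (hatE b₂) (E'.drop n) := by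
          have := List.forall₂_drop n hsel
          rwa [hn, List.drop_left] at this
        rcases (main_iff b₁ (graft (contract b₁) (E'.take n))).mpr
          ⟨E'.take n, hs₁, rfl⟩ with ⟨F₁, hF₁⟩
        rcases (main_iff b₂ (graft (contract b₂) (E'.drop n))).mpr
          ⟨E'.drop n, hs₂, rfl⟩ with ⟨F₂, hF₂⟩
        refine ⟨F₁ ++ F₂, ?_⟩
        have hg : graft (node (contract b₁) (contract b₂)) E'
            = node (graft (contract b₁) (E'.take n)) (graft (contract b₂) (E'.drop n)) := by
          conv_lhs => rw [← hsplit]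
          exact graft_node _ _ _ _ (by rw [← hs₁.length_eq, (rep_hatE b₁).2.1])
            (by rw [← hs₂.length_eq, (rep_hatE b₂).2.1])
        rw [hg]
        exact rep_node_iff.mpr ⟨b₁, b₂, F₁, F₂, rfl, rfl, hF₁, hF₂⟩

lemma sel_entries : ∀ {l E' : List PBT}, List.Forall₂ Sel l E' →
    ∀ e ∈ E', e = leaf ∨ e = Y := by
  intro l E' h
  induction h with
  | nil => simp
  | cons h₁ _ ih =>
    intro e he
    rcases List.mem_cons.mp he with rfl | he
    exacts [h₁.1, ih e he]

lemma count_ofFn {n : ℕ} (f : Fin n → PBT) (x : PBT) :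
    (List.ofFn f).count x = (Finset.univ.filter fun i => f i = x).card := by
  induction n with
  | zero => simp
  | succ n ih =>
    rw [List.ofFn_succ, List.count_cons, ih (fun i => f i.succ),
      Fin.card_filter_univ_succ' (p := fun i => f i = x)]
    simp only [beq_iff_eq]
    split_ifs <;> omega

lemma leaf_ne_Y : (leaf : PBT) ≠ Y := by simp [Y]


end PBT

/-- Growing against the unique maximal contraction gives a bijection: let `b` have
`β ≥ 2` leaves, let `(A, Ê)` be the maximal contraction data of `b` (so `n_Y(Ê) = L`
is maximal among all growing representations of `b`, `A` has `K` leaves, `K + L = β`),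
and let `I` be the set of positions where `Ê` equals `Y`. Then `J ↦ E^J ∝ A`
(growing `Y` at the positions in `J ⊆ I` and `ε` elsewhere) is a bijection from the
subsets of `I` onto the set of trees `a` occurring in some growing representation of
`b`, and `|E^J ∝ A| = K + |J| − 1`. -/
theorem growing_bijection (b : PBT) (hb : 2 ≤ b.leaves) (L : ℕ)
    (hL : IsGreatest {i : ℕ | ∃ a E, PBT.Rep b a E ∧ E.count PBT.Y = i} L)
    (A : PBT) (EA : List PBT) (hA : PBT.Rep b A EA) (hYA : EA.count PBT.Y = L) :
    Set.BijOn
      (fun J : Finset (Fin EA.length) =>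
        PBT.graft A (List.ofFn fun i => if i ∈ J then PBT.Y else PBT.leaf))
      {J : Finset (Fin EA.length) | ∀ i ∈ J, EA.get i = PBT.Y}
      {a : PBT | ∃ E, PBT.Rep b a E} ∧
    ∀ J : Finset (Fin EA.length), (∀ i ∈ J, EA.get i = PBT.Y) →
      (PBT.graft A (List.ofFn fun i => if i ∈ J then PBT.Y else PBT.leaf)).internal =
        A.leaves + J.card - 1 := by
  classical
  obtain ⟨hentC, hlenC, hgC⟩ := PBT.rep_hatE b
  have leaves_rep : ∀ a E, PBT.Rep b a E → b.leaves = a.leaves + E.count PBT.Y := by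
    rintro a E ⟨hent, hlen, hg⟩
    rw [← hg, PBT.leaves_graft a E hent hlen, hlen]
  have hK : ∀ a E, PBT.Rep b a E → (PBT.contract b).leaves ≤ a.leaves := by
    intro a E hE
    obtain ⟨E', hsel, rfl⟩ := (PBT.main_iff b a).mp ⟨E, hE⟩
    have hlen' : E'.length = (PBT.contract b).leaves := by rw [← hsel.length_eq, hlenC]
    rw [PBT.leaves_graft _ _ (PBT.sel_entries hsel) hlen', hlen']
    exact Nat.le_add_right _ _
  have hLc : L = (PBT.hatE b).count PBT.Y := by
    have h2 : (PBT.hatE b).count PBT.Y ≤ L :=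
      hL.2 ⟨PBT.contract b, PBT.hatE b, PBT.rep_hatE b, rfl⟩
    obtain ⟨a, E, hrep, hcount⟩ := hL.1
    have e1 := leaves_rep a E hrep
    have e2 := leaves_rep _ _ (PBT.rep_hatE b)
    have e3 := hK a E hrep
    omega
  have hAleaves : A.leaves = (PBT.contract b).leaves := by
    have e1 := leaves_rep A EA hA
    have e2 := leaves_rep _ _ (PBT.rep_hatE b)
    omega
  have hAc : A = PBT.contract b := by
    obtain ⟨E', hsel, hAeq⟩ := (PBT.main_iff b A).mp ⟨EA, hA⟩
    have hlen' : E'.length = (PBT.contract b).leaves := by rw [← hsel.length_eq, hlenC]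
    have h0 : E'.count PBT.Y = 0 := by
      have := PBT.leaves_graft (PBT.contract b) E' (PBT.sel_entries hsel) hlen'
      rw [← hAeq] at this
      omega
    have hrep : E' = List.replicate (PBT.contract b).leaves PBT.leaf := by
      refine List.eq_replicate_iff.mpr ⟨hlen', ?_⟩
      intro e he
      rcases PBT.sel_entries hsel e he with rfl | rfl
      · rfl
      · rw [List.count_eq_zero] at h0
        exact absurd he h0
    rw [hAeq, hrep, PBT.graft_replicate]
  have hEAc : EA = PBT.hatE b := by
    refine PBT.graft_inj A EA (PBT.hatE b) hA.2.1 ?_ ?_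
    · rw [hlenC, ← hAc]
    · rw [hA.2.2, hAc]
      exact hgC.symm
  subst hAc
  subst hEAc
  constructor
  · refine ⟨?_, ?_, ?_⟩
    · -- MapsTo
      intro J hJ
      refine (PBT.main_iff b _).mpr ⟨List.ofFn fun i => if i ∈ J then PBT.Y else PBT.leaf, ?_, rfl⟩
      refine List.forall₂_of_length_eq_of_get (by simp) ?_
      intro i h₁ h₂
      rw [List.get_ofFn]
      split_ifs with hmem
      · exact ⟨Or.inr rfl, fun _ => hJ _ hmem⟩
      · exact ⟨Or.inl rfl, fun h => absurd h PBT.leaf_ne_Y⟩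
    · -- InjOn
      intro J₁ h₁ J₂ h₂ heq
      simp only at heq
      have hlists := PBT.graft_inj (PBT.contract b) _ _
        (by rw [List.length_ofFn, hlenC]) (by rw [List.length_ofFn, hlenC]) heq
      have hf := List.ofFn_inj.mp hlists
      ext i
      have hfi := congrFun hf i
      constructor
      · intro hi
        by_contra hni
        rw [if_pos hi, if_neg hni] at hfi
        exact absurd hfi.symm PBT.leaf_ne_Y
      · intro hi
        by_contra hni
        rw [if_neg hni, if_pos hi] at hfi
        exact absurd hfi PBT.leaf_ne_Y
    · -- SurjOn
      rintro a ⟨E, hE⟩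
      obtain ⟨E', hsel, rfl⟩ := (PBT.main_iff b a).mp ⟨E, hE⟩
      have hlen' : (PBT.hatE b).length = E'.length := hsel.length_eq
      refine ⟨Finset.univ.filter
        (fun i : Fin (PBT.hatE b).length => E'.get (Fin.cast hlen' i) = PBT.Y), ?_, ?_⟩
      · intro i hi
        have hiY : E'.get (Fin.cast hlen' i) = PBT.Y := (Finset.mem_filter.mp hi).2
        have hs := hsel.get i.isLt (by rw [← hlen']; exact i.isLt)
        exact hs.2 hiY
      · show PBT.graft _ _ = _
        congr 1
        refine List.ext_get (by simp [← hlen']) ?_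
        intro i h₁ h₂
        rw [List.get_ofFn]
        split_ifs with hmem
        · exact ((Finset.mem_filter.mp hmem).2).symm
        · have hs := hsel.get (show i < (PBT.hatE b).length by
            rw [hlen']; exact h₂) h₂
          rcases hs.1 with h | h
          · exact h.symm
          · exact absurd h (fun hY => hmem (Finset.mem_filter.mpr ⟨Finset.mem_univ _, hY⟩))
  · -- internal count
    intro J hJ
    have hfent : ∀ e ∈ (List.ofFn fun i => if i ∈ J then PBT.Y else PBT.leaf),
        e = PBT.leaf ∨ e = PBT.Y := by
      intro e he
      rcases List.mem_ofFn.mp he with ⟨i, rfl⟩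
      split_ifs
      exacts [Or.inr rfl, Or.inl rfl]
    have hflen : (List.ofFn fun i => if i ∈ J then PBT.Y else PBT.leaf).length
        = (PBT.contract b).leaves := by rw [List.length_ofFn, hlenC]
    rw [PBT.internal_graft _ _ hfent hflen, PBT.count_ofFn]
    have hfilter : (Finset.univ.filter
        fun i => (if i ∈ J then PBT.Y else PBT.leaf) = PBT.Y) = J := by
      ext i
      by_cases hi : i ∈ J <;> simp [hi, PBT.Y]
    rw [hfilter, PBT.internal_eq_leaves_sub_one]
    have := PBT.leaves_pos (PBT.contract b)
    omega
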